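/- A characteristic sample determines the machine among machines of minimal size (abstract form of the characteristic sample requirement): if M = (I,O,Q,q0,δ,λ) is a minimal Moore machine, S_IO is a characteristic sample for M, and M' = (I,O,Q',q0',δ',λ') is a complete Moore machine over the same alphabets I and O with |Q'| = |Q| that is consistent with every trace in S_IO, then M' is equivalent to M, i.e., λ'*(q0',w) = λ*(q0,w) for every w ∈ I*. -/

import Mathlib

/-- A (complete, deterministic) Moore machine with input alphabet `I`,
output alphabet `O`, state set `Q`, initial state `init`, total transition
function `trans` and total output function `out`. -/
structure Moore (I O Q : Type) where
  init : Q
  trans : Q → I → Q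
  out : Q → O

namespace Moore

variable {I O Q : Type}

/-- Extended transition function: `δ*(q,ε)=q` and `δ*(q,w·a)=δ(δ*(q,w),a)`. -/
def deltaStar (M : Moore I O Q) (q : Q) (w : List I) : Q :=
  w.foldl M.trans q

/-- Extended output function: `λ*(q,w)` lists the output `λ(δ*(q,u))` for
every prefix `u` of `w` in order; this satisfies `λ*(q,ε)=λ(q)` and
`λ*(q,w·a)=λ*(q,w)·λ(δ*(q,w·a))`. -/
def lambdaStar (M : Moore I O Q) (q : Q) (w : List I) : List O :=
  w.inits.map fun u => M.out (M.deltaStar q u)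

/-- Two Moore machines over the same alphabets are equivalent iff they produce
the same output word on every input word. -/
def Equivalent {Q' : Type} (M : Moore I O Q) (M' : Moore I O Q') : Prop :=
  ∀ w : List I, M.lambdaStar M.init w = M'.lambdaStar M'.init w

/-- `M` is minimal iff every Moore machine equivalent to `M` has at least as
many states. -/
def Minimal [Fintype Q] (M : Moore I O Q) : Prop :=
  ∀ (Q' : Type) [Fintype Q'] (M' : Moore I O Q'),
    M.Equivalent M' → Fintype.card Q ≤ Fintype.card Q'

end Moore

/-- Shortlex ("length then lexicographic") strict order on words. -/
def ShortlexLt {I : Type} [LinearOrder I] (w w' : List I) : Prop :=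
  w.length < w'.length ∨ (w.length = w'.length ∧ List.Lex (· < ·) w w')

/-- `w` is the shortlex-least element of the set `S` of words. -/
def IsShortlexLeast {I : Type} [LinearOrder I] (S : Set (List I)) (w : List I) : Prop :=
  w ∈ S ∧ ∀ v ∈ S, w = v ∨ ShortlexLt w v

/-- The set of all prefixes of words in `S`. -/
def wordPrefixes {I : Type} (S : Set (List I)) : Set (List I) :=
  {u | ∃ w ∈ S, u <+: w}

namespace Moore

variable {I O Q : Type}

/-- `SP` is the shortest-prefix map of `M`: for every state `q`, `SP q` is the
shortlex-least word reaching `q` from the initial state. -/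
def IsShortestPrefixMap [LinearOrder I] (M : Moore I O Q) (SP : Q → List I) : Prop :=
  ∀ q : Q, IsShortlexLeast {w | M.deltaStar M.init w = q} (SP q)

/-- The nucleus `N_L(M)`: the empty word together with all one-letter
extensions of shortest prefixes. -/
def nucleus (_M : Moore I O Q) (SP : Q → List I) : Set (List I) :=
  {[]} ∪ {w | ∃ q : Q, ∃ a : I, w = SP q ++ [a]}

/-- `MD` is a minimum-distinguishing-suffix map of `M`: for all distinct
states `qu qv`, `MD qu qv` is the shortlex-least word on which the outputs
from `qu` and from `qv` differ. -/
def IsMinDistSuffixMap [LinearOrder I] (M : Moore I O Q) (MD : Q → Q → List I) : Prop :=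
  ∀ qu qv : Q, qu ≠ qv →
    IsShortlexLeast {w | M.lambdaStar qu w ≠ M.lambdaStar qv w} (MD qu qv)

/-- `M` is consistent with the Moore `(I,O)`-trace `t = (ρI, ρO)` iff running
`M` on `ρI` from the initial state produces `ρO`. -/
def ConsistentTrace (M : Moore I O Q) (t : List I × List O) : Prop :=
  M.lambdaStar M.init t.1 = t.2

/-- `S` is a characteristic sample for `M` (with shortest-prefix map `SP` and
minimum-distinguishing-suffix map `MD`):
(1) the nucleus is contained in the prefixes of the input words of `S`, and
(2) for all `u ∈ S_P(M)` and `v ∈ N_L(M)` reaching different states, both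
`u·w` and `v·w` are prefixes of input words of `S`, where `w` is the minimum
distinguishing suffix of the two states. -/
def CharSample [LinearOrder I] (M : Moore I O Q) (SP : Q → List I)
    (MD : Q → Q → List I) (S : Set (List I × List O)) : Prop :=
  M.nucleus SP ⊆ wordPrefixes (Prod.fst '' S) ∧
  ∀ u ∈ Set.range SP, ∀ v ∈ M.nucleus SP,
    M.deltaStar M.init u ≠ M.deltaStar M.init v →
      u ++ MD (M.deltaStar M.init u) (M.deltaStar M.init v) ∈ wordPrefixes (Prod.fst '' S) ∧
      v ++ MD (M.deltaStar M.init u) (M.deltaStar M.init v) ∈ wordPrefixes (Prod.fst '' S)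

end Moore

/-!
The shortest prefixes give a map `f q := δ'*(q0', S_P(q))` from the states of `M` to those of
`M'`. A difference in `M` between the states reached by a shortest prefix and by a word of the
nucleus is witnessed by its minimum distinguishing suffix, and the sample records both
continuations, so `M'` cannot merge the two states either. Hence `f` is injective, thus
bijective as `|Q'| = |Q|`, and, comparing `δ'*(q0', S_P(q)·a)` with the `f`-images of all
states, `f` commutes with the transitions; the nucleus also fixes the outputs of the images.
So `f` is a homomorphism of Moore machines, and homomorphisms preserve `λ*`.
-/

theorem List.Lex.append_right_of_length_eq {α : Type*} {r : α → α → Prop} {w v : List α}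
    (h : List.Lex r w v) (hlen : w.length = v.length) (s : List α) :
    List.Lex r (w ++ s) (v ++ s) := by
  induction h with
  | nil => simp at hlen
  | cons _ ih => exact List.Lex.cons (ih (by simpa using hlen))
  | rel h => exact List.Lex.rel h

section Shortlex

variable {I : Type} [LinearOrder I]

theorem ShortlexLt.asymm {w v : List I} (h : ShortlexLt w v) : ¬ ShortlexLt v w := by
  rintro (hvw | ⟨hvw, hlex⟩) <;> rcases h with hwv | ⟨hwv, hlex'⟩
  · omega
  · omega
  · omega
  · exact (List.Lex.asymm (· < ·)).asymm _ _ hlex' hlex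

theorem shortlexLt_or_shortlexLt_of_ne {w v : List I} (h : w ≠ v) :
    ShortlexLt w v ∨ ShortlexLt v w := by
  rcases lt_trichotomy w.length v.length with hlen | hlen | hlen
  · exact Or.inl (Or.inl hlen)
  · rcases trichotomous_of (List.Lex (· < ·)) w v with hlex | rfl | hlex
    · exact Or.inl (Or.inr ⟨hlen, hlex⟩)
    · exact absurd rfl h
    · exact Or.inr (Or.inr ⟨hlen.symm, hlex⟩)
  · exact Or.inr (Or.inl hlen)

theorem not_shortlexLt_nil (w : List I) : ¬ ShortlexLt w [] := by
  rintro (hlen | ⟨-, hlex⟩)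
  · exact Nat.not_lt_zero _ hlen
  · exact List.not_lex_nil hlex

theorem ShortlexLt.append_right {w v : List I} (h : ShortlexLt w v) (s : List I) :
    ShortlexLt (w ++ s) (v ++ s) := by
  rcases h with hlen | ⟨hlen, hlex⟩
  · exact Or.inl (by simpa using hlen)
  · exact Or.inr ⟨by simp [hlen], hlex.append_right_of_length_eq hlen s⟩

theorem IsShortlexLeast.unique {S : Set (List I)} {w v : List I}
    (hw : IsShortlexLeast S w) (hv : IsShortlexLeast S v) : w = v := by
  rcases hw.2 v hv.1 with h | hwv
  · exact h
  · rcases hv.2 w hw.1 with h | hvw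
    · exact h.symm
    · exact absurd hvw hwv.asymm

end Shortlex

namespace Moore

variable {I O Q Q' : Type}

section Runs

variable (M : Moore I O Q)

theorem deltaStar_append (q : Q) (u w : List I) :
    M.deltaStar q (u ++ w) = M.deltaStar (M.deltaStar q u) w :=
  List.foldl_append

theorem deltaStar_cons (q : Q) (a : I) (w : List I) :
    M.deltaStar q (a :: w) = M.deltaStar (M.trans q a) w := rfl

theorem lambdaStar_nil (q : Q) : M.lambdaStar q [] = [M.out q] := rfl

theorem lambdaStar_cons (q : Q) (a : I) (w : List I) :
    M.lambdaStar q (a :: w) = M.out q :: M.lambdaStar (M.trans q a) w := by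
  simp [lambdaStar, deltaStar, Function.comp_def]

theorem lambdaStar_deltaStar (q : Q) (u w : List I) :
    M.lambdaStar (M.deltaStar q u) w = (M.lambdaStar q (u ++ w)).drop u.length := by
  induction u generalizing q with
  | nil => rfl
  | cons a u ih => simpa [deltaStar_cons, lambdaStar_cons] using ih (M.trans q a)

theorem lambdaStar_eq_take_append (q : Q) (u w : List I) :
    M.lambdaStar q u = (M.lambdaStar q (u ++ w)).take (u.length + 1) := by
  induction u generalizing q with
  | nil => cases w <;> simp [lambdaStar_nil, lambdaStar_cons]
  | cons a u ih => simpa [lambdaStar_cons] using ih (M.trans q a)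

end Runs

theorem lambdaStar_map (M : Moore I O Q) (M' : Moore I O Q') (f : Q → Q')
    (hout : ∀ q, M'.out (f q) = M.out q)
    (htrans : ∀ q a, M'.trans (f q) a = f (M.trans q a)) (q : Q) (w : List I) :
    M'.lambdaStar (f q) w = M.lambdaStar q w := by
  induction w generalizing q with
  | nil => rw [lambdaStar_nil, lambdaStar_nil, hout]
  | cons a w ih => rw [lambdaStar_cons, lambdaStar_cons, hout, htrans, ih]

def AgreeOn (M : Moore I O Q) (M' : Moore I O Q') (P : Set (List I)) : Prop :=
  ∀ p ∈ P, M'.lambdaStar M'.init p = M.lambdaStar M.init p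

theorem agreeOn_wordPrefixes {M : Moore I O Q} {M' : Moore I O Q'}
    {S : Set (List I × List O)} (hcons : ∀ t ∈ S, M.ConsistentTrace t)
    (hcons' : ∀ t ∈ S, M'.ConsistentTrace t) : M.AgreeOn M' (wordPrefixes (Prod.fst '' S)) := by
  rintro p ⟨_, ⟨t, ht, rfl⟩, r, hr⟩
  rw [lambdaStar_eq_take_append M' _ p r, lambdaStar_eq_take_append M _ p r, hr,
    hcons' t ht, hcons t ht]

section ShortestPrefix

variable [LinearOrder I] {M : Moore I O Q} {SP : Q → List I}

theorem IsShortestPrefixMap.deltaStar_eq (hSP : M.IsShortestPrefixMap SP) (q : Q) :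
    M.deltaStar M.init (SP q) = q :=
  (hSP q).1

theorem IsShortestPrefixMap.init_eq_nil (hSP : M.IsShortestPrefixMap SP) : SP M.init = [] :=
  ((hSP M.init).2 [] rfl).resolve_right (not_shortlexLt_nil _)

/-- A word reaching the state of `w` and smaller than `w` would, followed by `a`, be a word
smaller than `SP q` reaching `q`. -/
theorem IsShortestPrefixMap.eq_of_append_singleton (hSP : M.IsShortestPrefixMap SP) {q : Q}
    {w : List I} {a : I} (h : SP q = w ++ [a]) : SP (M.deltaStar M.init w) = w := by
  refine (hSP _).unique ⟨rfl, fun w' hw' => ?_⟩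
  by_contra! hmin
  obtain ⟨hne, hnlt⟩ := hmin
  have hlt : ShortlexLt w' w := (shortlexLt_or_shortlexLt_of_ne hne).resolve_left hnlt
  have hreach : M.deltaStar M.init (w' ++ [a]) = q := by
    rw [deltaStar_append, hw', ← deltaStar_append, ← h, hSP.deltaStar_eq]
  rcases (hSP q).2 _ hreach with heq | hgt
  · exact hne (List.append_cancel_right (h.symm.trans heq))
  · exact (h ▸ hlt.append_right [a]).asymm hgt

theorem IsShortestPrefixMap.mem_nucleus (hSP : M.IsShortestPrefixMap SP) (q : Q) :
    SP q ∈ M.nucleus SP := by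
  rcases List.eq_nil_or_concat (SP q) with h | ⟨w, a, h⟩
  · exact Or.inl h
  · rw [List.concat_eq_append] at h
    exact Or.inr ⟨M.deltaStar M.init w, a, by rw [h, hSP.eq_of_append_singleton h]⟩

end ShortestPrefix

section CharSample

variable [LinearOrder I] {M : Moore I O Q} {M' : Moore I O Q'} {SP : Q → List I}
  {MD : Q → Q → List I} {S : Set (List I × List O)}

/-- The sample contains the minimum distinguishing suffix of the two states after both `u` and
`v`, so `M'` would produce different outputs from a single state. -/
theorem CharSample.deltaStar_eq_of_deltaStar_eq (hMD : M.IsMinDistSuffixMap MD)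
    (hCS : M.CharSample SP MD S)
    (hagree : M.AgreeOn M' (wordPrefixes (Prod.fst '' S)))
    {u v : List I} (hu : u ∈ Set.range SP) (hv : v ∈ M.nucleus SP)
    (h' : M'.deltaStar M'.init u = M'.deltaStar M'.init v) :
    M.deltaStar M.init u = M.deltaStar M.init v := by
  by_contra hne
  obtain ⟨hmu, hmv⟩ := hCS.2 u hu v hv hne
  set d := MD (M.deltaStar M.init u) (M.deltaStar M.init v)
  have hresidual : ∀ x, x ++ d ∈ wordPrefixes (Prod.fst '' S) →
      M'.lambdaStar (M'.deltaStar M'.init x) d = M.lambdaStar (M.deltaStar M.init x) d :=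
    fun x hx => by rw [lambdaStar_deltaStar, lambdaStar_deltaStar, hagree _ hx]
  exact (hMD _ _ hne).1 (by rw [← hresidual u hmu, ← hresidual v hmv, h'])

theorem CharSample.injective_deltaStar (hSP : M.IsShortestPrefixMap SP)
    (hMD : M.IsMinDistSuffixMap MD) (hCS : M.CharSample SP MD S)
    (hagree : M.AgreeOn M' (wordPrefixes (Prod.fst '' S))) :
    Function.Injective fun q => M'.deltaStar M'.init (SP q) := fun q₁ q₂ h => by
  simpa only [hSP.deltaStar_eq] using
    hCS.deltaStar_eq_of_deltaStar_eq hMD hagree ⟨q₁, rfl⟩ (hSP.mem_nucleus q₂) h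

theorem CharSample.out_deltaStar (hSP : M.IsShortestPrefixMap SP) (hCS : M.CharSample SP MD S)
    (hagree : M.AgreeOn M' (wordPrefixes (Prod.fst '' S))) (q : Q) :
    M'.out (M'.deltaStar M'.init (SP q)) = M.out q := by
  have hmem : SP q ++ [] ∈ wordPrefixes (Prod.fst '' S) := by
    simpa using hCS.1 (hSP.mem_nucleus q)
  have h := lambdaStar_deltaStar M' M'.init (SP q) []
  rw [hagree _ hmem, ← lambdaStar_deltaStar, hSP.deltaStar_eq, lambdaStar_nil,
    lambdaStar_nil] at h
  exact List.singleton_injective h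

/-- Surjectivity provides a state `p` whose shortest prefix leads `M'` to where `S_P(q)·a` does;
since `S_P(q)·a` lies in the nucleus, `p` must be the `a`-successor of `q`. -/
theorem CharSample.trans_deltaStar (hSP : M.IsShortestPrefixMap SP)
    (hMD : M.IsMinDistSuffixMap MD) (hCS : M.CharSample SP MD S)
    (hagree : M.AgreeOn M' (wordPrefixes (Prod.fst '' S)))
    (hsurj : Function.Surjective fun q => M'.deltaStar M'.init (SP q)) (q : Q) (a : I) :
    M'.trans (M'.deltaStar M'.init (SP q)) a = M'.deltaStar M'.init (SP (M.trans q a)) := by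
  obtain ⟨p, hp⟩ := hsurj (M'.deltaStar M'.init (SP q ++ [a]))
  have hpq : p = M.trans q a := by
    have h := hCS.deltaStar_eq_of_deltaStar_eq hMD hagree ⟨p, rfl⟩ (Or.inr ⟨q, a, rfl⟩) hp
    rwa [hSP.deltaStar_eq, deltaStar_append, hSP.deltaStar_eq] at h
  rw [← hpq]
  exact (hp.trans (deltaStar_append M' _ _ _)).symm

end CharSample

end Moore

theorem charSample_determines_machine_general {I O Q Q' : Type} [LinearOrder I]
    [Fintype Q] [Fintype Q']
    (M : Moore I O Q)
    (SP : Q → List I) (hSP : M.IsShortestPrefixMap SP)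
    (MD : Q → Q → List I) (hMD : M.IsMinDistSuffixMap MD)
    (S : Set (List I × List O))
    (hcons : ∀ t ∈ S, M.ConsistentTrace t)
    (hCS : M.CharSample SP MD S)
    (M' : Moore I O Q') (hcons' : ∀ t ∈ S, M'.ConsistentTrace t)
    (hcard : Fintype.card Q' = Fintype.card Q) :
    ∀ w : List I, M'.lambdaStar M'.init w = M.lambdaStar M.init w := by
  have hagree := Moore.agreeOn_wordPrefixes hcons hcons'
  set f : Q → Q' := fun q => M'.deltaStar M'.init (SP q)
  have hbij : f.Bijective := (Fintype.bijective_iff_injective_and_card f).2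
    ⟨hCS.injective_deltaStar hSP hMD hagree, hcard.symm⟩
  have hinit : f M.init = M'.init := by
    simp only [f, hSP.init_eq_nil]
    rfl
  intro w
  rw [← hinit]
  exact Moore.lambdaStar_map M M' f (hCS.out_deltaStar hSP hagree)
    (hCS.trans_deltaStar hSP hMD hagree hbij.2) M.init w

/-- A characteristic sample determines the machine among
machines of minimal size: any complete Moore machine with `|Q'| = |Q|` states
consistent with a characteristic sample of a minimal machine `M` is
equivalent to `M`. -/
theorem charSample_determines_machine {I O Q Q' : Type} [LinearOrder I]
    [Fintype I] [Fintype O] [Fintype Q] [Fintype Q']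
    (M : Moore I O Q) (hmin : M.Minimal)
    (SP : Q → List I) (hSP : M.IsShortestPrefixMap SP)
    (MD : Q → Q → List I) (hMD : M.IsMinDistSuffixMap MD)
    (S : Set (List I × List O)) (hfin : S.Finite)
    (hcons : ∀ t ∈ S, M.ConsistentTrace t)
    (hCS : M.CharSample SP MD S)
    (M' : Moore I O Q') (hcons' : ∀ t ∈ S, M'.ConsistentTrace t)
    (hcard : Fintype.card Q' = Fintype.card Q) :
    ∀ w : List I, M'.lambdaStar M'.init w = M.lambdaStar M.init w :=
  charSample_determines_machine_general M SP hSP MD hMD S hcons hCS M' hcons' hcard
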